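/- For c ∈ [1/2, 1) and P ∈ 𝒫₆, the attractor A(c,P) is connected. In particular there exists a sequence {d_i}_{i≥1} with each d_i ∈ {v₁-v₃, v₃-v₁, 0} such that v₁ - v₃ + Σ_{i=1}^∞ c^i d_i = 0, witnessing A₁ ∩ A₃ ≠ ∅. -/

import Mathlib

/- STATEMENT 19: For c ∈ [1/2, 1) and P ∈ 𝒫₆, the attractor A(c,P) is connected; in
particular there exists a sequence d with each term in {v₁-v₃, v₃-v₁, 0} such that
v₁ - v₃ + Σ_{i=1}^∞ cⁱ dᵢ = 0, witnessing A₁ ∩ A₃ ≠ ∅. (0-based: v₁ = vtx 0, v₃ = vtx 2;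
the sum is written with d indexed from 0 and weight c^(i+1).) -/
noncomputable section
open Matrix

abbrev E3 := EuclideanSpace ℝ (Fin 3)

def vtx : Fin 4 → E3 :=
  ![!₂[1, -1, 1], !₂[-1, 1, 1], !₂[-1, -1, -1], !₂[1, 1, -1]]

/-- The other four vertices of the cube `[-1,1]³`. -/
def vtx' : Fin 4 → E3 :=
  ![!₂[1, 1, 1], !₂[-1, -1, 1], !₂[1, -1, -1], !₂[-1, 1, -1]]

/-- The cube `C₀ = [-1,1]³`. -/
def C0 : Set E3 := {x | ∀ i, x i ∈ Set.Icc (-1 : ℝ) 1}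

/-- The regular tetrahedron `T₀` with vertices `v₁, v₂, v₃, v₄`. -/
def T0 : Set E3 := convexHull ℝ (Set.range vtx)

/-- Membership in the hexahedral group `𝒫₆`: rotations preserving the cube `C₀`. -/
def memP6 (Q : Matrix (Fin 3) (Fin 3) ℝ) : Prop :=
  Q ∈ Matrix.specialOrthogonalGroup (Fin 3) ℝ ∧ Matrix.toEuclideanLin Q '' C0 = C0

/-- Membership in the tetrahedral group `𝒫₄`: rotations preserving the tetrahedron `T₀`. -/
def memP4 (Q : Matrix (Fin 3) (Fin 3) ℝ) : Prop :=
  Q ∈ Matrix.specialOrthogonalGroup (Fin 3) ℝ ∧ Matrix.toEuclideanLin Q '' T0 = T0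

def fmap (c : ℝ) (P : Matrix (Fin 3) (Fin 3) ℝ) (i : Fin 4) (x : E3) : E3 :=
  c • Matrix.toEuclideanLin P x + vtx i

def IsAttractor (c : ℝ) (P : Matrix (Fin 3) (Fin 3) ℝ) (A : Set E3) : Prop :=
  A.Nonempty ∧ IsCompact A ∧ A = ⋃ i : Fin 4, fmap c P i '' A

/-! The attractor `A` is the intersection of the nested compact connected sets `Fⁿ(K)`, where `F` is
the Hutchinson operator and `K` a large ball; `F` preserves connectedness of sets containing `A`
as soon as the pieces `fᵢ(A)` form a connected intersection graph (Hata). Here any two pieces meet: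
`fᵢ(x) = fⱼ(y)` means `cP(x - y) = vⱼ - vᵢ`. For `c ≥ 1/2` the greedy algorithm gives
`1 = ∑ εₖ cᵏ⁺¹` with `εₖ ∈ {0, 1}`, and `x - y = ∑ₖ (cP)ᵏ εₖ P⁻ᵏ⁻¹ (vⱼ - vᵢ)` is a difference of
two points of `A` given by addresses, because `P⁻¹` permutes the differences of vertices of `T0`. -/

open Set Filter Topology Function
open scoped NNReal

section Hutchinson

variable {X ι : Type*}

def hutchinson (f : ι → X → X) (S : Set X) : Set X := ⋃ i, f i '' S

variable {f : ι → X → X} {A K S : Set X}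

theorem hutchinson_mono : Monotone (hutchinson f) :=
  fun _ _ h => iUnion_mono fun _ => image_mono h

theorem subset_iterate_hutchinson (hA : A ⊆ hutchinson f A) (hAK : A ⊆ K) (n : ℕ) :
    A ⊆ (hutchinson f)^[n] K := by
  induction n with
  | zero => exact hAK
  | succ n ih => rw [iterate_succ_apply']; exact hA.trans (hutchinson_mono ih)

theorem antitone_iterate_hutchinson (hK : hutchinson f K ⊆ K) :
    Antitone fun n => (hutchinson f)^[n] K :=
  antitone_nat_of_succ_le fun n => by
    rw [iterate_succ_apply]; exact hutchinson_mono.iterate n hK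

section Topology

variable [TopologicalSpace X]

theorem IsCompact.hutchinson [Finite ι] (hf : ∀ i, Continuous (f i)) (hS : IsCompact S) :
    IsCompact (hutchinson f S) :=
  isCompact_iUnion fun _ => hS.image (hf _)

theorem IsPreconnected.hutchinson (hf : ∀ i, Continuous (f i)) (hS : IsPreconnected S)
    (hAS : A ⊆ S)
    (hchain : ∀ i j, Relation.ReflTransGen (fun i j => (f i '' A ∩ f j '' A).Nonempty) i j) :
    IsPreconnected (hutchinson f S) :=
  .iUnion_of_reflTransGen (fun i => hS.image _ (hf i).continuousOn) fun i j =>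
    Relation.ReflTransGen.mono
      (fun _ _ h => h.mono (inter_subset_inter (image_mono hAS) (image_mono hAS))) _ _ (hchain i j)

theorem isPreconnected_iInter_of_directed [T2Space X] {κ : Type*} [Nonempty κ] {S : κ → Set X}
    (hdir : Directed (· ⊇ ·) S) (hc : ∀ k, IsCompact (S k)) (hp : ∀ k, IsPreconnected (S k)) :
    IsPreconnected (⋂ k, S k) := by
  obtain ⟨k₀⟩ := ‹Nonempty κ›
  have hcl : IsClosed (⋂ k, S k) := isClosed_iInter fun k => (hc k).isClosed
  have hcpt : IsCompact (⋂ k, S k) := (hc k₀).of_isClosed_subset hcl (iInter_subset _ k₀)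
  rw [isPreconnected_iff_subset_of_fully_disjoint_closed hcl]
  intro u v hu hv huv hdisj
  obtain ⟨U, V, hU, hV, huU, hvV, hUV⟩ := SeparatedNhds.of_isCompact_isCompact
    (hcpt.inter_right hu) (hcpt.inter_right hv) (hdisj.mono inter_subset_right inter_subset_right)
  obtain ⟨k, hk⟩ := exists_subset_nhds_of_isCompact hdir hc (U := U ∪ V) fun x hx =>
    (hU.union hV).mem_nhds <| (huv hx).imp (fun h => huU ⟨hx, h⟩) (fun h => hvV ⟨hx, h⟩)
  refine ((hp k).subset_or_subset hU hV hUV hk).imp (fun hkU x hx => ?_) (fun hkV x hx => ?_)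
  · exact (huv hx).resolve_right fun h =>
      disjoint_left.1 hUV (hkU (mem_iInter.1 hx k)) (hvV ⟨hx, h⟩)
  · exact (huv hx).resolve_left fun h =>
      disjoint_left.1 hUV (huU ⟨hx, h⟩) (hkV (mem_iInter.1 hx k))

end Topology

section Metric

variable [MetricSpace X] {q : ℝ≥0}

theorem exists_dist_le_of_mem_iterate_hutchinson (hf : ∀ i, LipschitzWith q (f i))
    (hA : hutchinson f A ⊆ A) {a₀ : X} {r : ℝ} (ha₀ : a₀ ∈ A)
    (hK : K ⊆ Metric.closedBall a₀ r) (n : ℕ) :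
    ∀ x ∈ (hutchinson f)^[n] K, ∃ a ∈ A, dist x a ≤ q ^ n * r := by
  induction n with
  | zero => exact fun x hx => ⟨a₀, ha₀, by simpa using hK hx⟩
  | succ n ih =>
    intro x hx
    rw [iterate_succ_apply'] at hx
    obtain ⟨i, y, hy, rfl⟩ := mem_iUnion.1 hx
    obtain ⟨a, ha, hya⟩ := ih y hy
    refine ⟨f i a, hA (mem_iUnion.2 ⟨i, a, ha, rfl⟩), ?_⟩
    calc dist (f i y) (f i a) ≤ q * dist y a := (hf i).dist_le_mul y a
      _ ≤ q * (q ^ n * r) := by gcongr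
      _ = q ^ (n + 1) * r := by ring

theorem iInter_iterate_hutchinson_subset (hf : ∀ i, LipschitzWith q (f i)) (hq : q < 1)
    (hA : hutchinson f A ⊆ A) (hAc : IsClosed A) (hA₀ : A.Nonempty) (hK : Bornology.IsBounded K) :
    ⋂ n, (hutchinson f)^[n] K ⊆ A := by
  obtain ⟨a₀, ha₀⟩ := hA₀
  obtain ⟨r, hr⟩ := hK.subset_closedBall a₀
  intro x hx
  rw [← hAc.closure_eq, Metric.mem_closure_iff]
  intro ε hε
  have hlim : Tendsto (fun n => (q : ℝ) ^ n * r) atTop (𝓝 0) := by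
    simpa using (tendsto_pow_atTop_nhds_zero_of_lt_one q.2 hq).mul_const r
  obtain ⟨n, hn⟩ := (hlim.eventually (gt_mem_nhds hε)).exists
  obtain ⟨a, ha, hxa⟩ :=
    exists_dist_le_of_mem_iterate_hutchinson hf hA ha₀ hr n x (mem_iInter.1 hx n)
  exact ⟨a, ha, hxa.trans_lt hn⟩

theorem subset_of_subset_hutchinson (hf : ∀ i, LipschitzWith q (f i)) (hq : q < 1)
    (hA : hutchinson f A ⊆ A) (hAc : IsClosed A) (hA₀ : A.Nonempty) (hK : Bornology.IsBounded K)
    (hKf : K ⊆ hutchinson f K) : K ⊆ A :=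
  (subset_iInter (subset_iterate_hutchinson hKf subset_rfl)).trans
    (iInter_iterate_hutchinson_subset hf hq hA hAc hA₀ hK)

theorem isPreconnected_of_hutchinson_eq [Finite ι] (hf : ∀ i, LipschitzWith q (f i))
    (hq : q < 1)
    (hA : hutchinson f A = A) (hAc : IsClosed A) (hKc : IsCompact K) (hKp : IsPreconnected K)
    (hAK : A ⊆ K) (hKf : hutchinson f K ⊆ K)
    (hchain : ∀ i j, Relation.ReflTransGen (fun i j => (f i '' A ∩ f j '' A).Nonempty) i j) :
    IsPreconnected A := by
  rcases A.eq_empty_or_nonempty with rfl | hA₀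
  · exact isPreconnected_empty
  have hcont i := (hf i).continuous
  have hA_sub := subset_iterate_hutchinson hA.ge hAK
  rw [← (iInter_iterate_hutchinson_subset hf hq hA.le hAc hA₀ hKc.isBounded).antisymm
    (subset_iInter hA_sub)]
  refine isPreconnected_iInter_of_directed (antitone_iterate_hutchinson hKf).directed_ge
    (fun n => ?_) fun n => ?_
  · induction n with
    | zero => exact hKc
    | succ n ih => rw [iterate_succ_apply']; exact ih.hutchinson hcont
  · induction n with
    | zero => exact hKp
    | succ n ih => rw [iterate_succ_apply']; exact ih.hutchinson hcont (hA_sub n) hchain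

end Metric

end Hutchinson

section Affine

variable {E ι : Type*} [NormedAddCommGroup E] [NormedSpace ℝ E] (L : E →L[ℝ] E) {A : Set E}

theorem ContinuousLinearMap.lipschitzWith_add_const (b : E) :
    LipschitzWith ‖L‖₊ fun x => L x + b :=
  LipschitzWith.of_dist_le_mul fun x y => by
    rw [dist_add_right]; exact L.lipschitz.dist_le_mul x y

theorem isPreconnected_of_hutchinson_affine [ProperSpace E] [Finite ι] (hL : ‖L‖ < 1)
    (v : ι → E)
    (hA : hutchinson (fun i x => L x + v i) A = A) (hAc : IsCompact A)
    (hchain : ∀ i j, Relation.ReflTransGen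
      (fun i j => ((fun x => L x + v i) '' A ∩ (fun x => L x + v j) '' A).Nonempty) i j) :
    IsPreconnected A := by
  obtain ⟨B, hB⟩ := Finite.exists_le fun i => ‖v i‖
  obtain ⟨r, hr⟩ := hAc.isBounded.subset_closedBall 0
  have h1L : 0 < 1 - ‖L‖ := sub_pos.2 hL
  set R := max r (B / (1 - ‖L‖))
  have hBR : B ≤ (1 - ‖L‖) * R := by
    rw [mul_comm, ← div_le_iff₀ h1L]; exact le_max_right _ _
  refine isPreconnected_of_hutchinson_eq (fun i => L.lipschitzWith_add_const (v i))
    (q := ‖L‖₊) hL hA hAc.isClosed (isCompact_closedBall 0 R)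
    (convex_closedBall 0 R).isPreconnected
    (hr.trans (Metric.closedBall_subset_closedBall (le_max_left _ _))) ?_ hchain
  rintro _ ⟨_, ⟨i, rfl⟩, x, hx, rfl⟩
  rw [mem_closedBall_zero_iff] at hx ⊢
  calc ‖L x + v i‖ ≤ ‖L‖ * ‖x‖ + ‖v i‖ :=
        (norm_add_le _ _).trans (by gcongr; exact L.le_opNorm x)
    _ ≤ ‖L‖ * R + B := by gcongr; exact hB i
    _ ≤ R := by linarith

theorem ContinuousLinearMap.norm_pow_apply_le (k : ℕ) (x : E) :
    ‖(L ^ k) x‖ ≤ ‖L‖ ^ k * ‖x‖ := by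
  induction k with
  | zero => simp
  | succ k ih =>
    rw [pow_succ', mul_apply_eq_comp, pow_succ', mul_assoc]
    exact L.le_opNorm_of_le ih

theorem ContinuousLinearMap.smul_pow_apply (c : ℝ) (k : ℕ) (x : E) :
    ((c • L) ^ k) x = c ^ k • (L ^ k) x := by
  induction k with
  | zero => simp
  | succ k ih =>
    rw [pow_succ', mul_apply_eq_comp, ih, _root_.smul_apply, map_smul, smul_smul, ← pow_succ',
      pow_succ' L, mul_apply_eq_comp]

variable {L}

theorem norm_tsum_pow_apply_le (hL : ‖L‖ < 1) {d : ℕ → E} {B : ℝ} (hd : ∀ k, ‖d k‖ ≤ B) :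
    ‖∑' k, (L ^ k) (d k)‖ ≤ (1 - ‖L‖)⁻¹ * B :=
  tsum_of_norm_bounded ((hasSum_geometric_of_lt_one (norm_nonneg L) hL).mul_right B) fun k =>
    (L.norm_pow_apply_le k (d k)).trans (by gcongr; exact hd k)

variable [CompleteSpace E]

theorem summable_pow_apply (hL : ‖L‖ < 1) {d : ℕ → E} {B : ℝ} (hd : ∀ k, ‖d k‖ ≤ B) :
    Summable fun k => (L ^ k) (d k) :=
  .of_norm_bounded ((summable_geometric_of_lt_one (norm_nonneg L) hL).mul_right B) fun k =>
    (L.norm_pow_apply_le k (d k)).trans (by gcongr; exact hd k)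

theorem tsum_pow_apply_eq_apply_add (hL : ‖L‖ < 1) {d : ℕ → E} {B : ℝ} (hd : ∀ k, ‖d k‖ ≤ B) :
    ∑' k, (L ^ k) (d k) = L (∑' k, (L ^ k) (d (k + 1))) + d 0 := by
  rw [(summable_pow_apply hL hd).tsum_eq_zero_add,
    L.map_tsum (summable_pow_apply hL fun k => hd _), add_comm]
  simp [pow_succ']

theorem tsum_pow_apply_mem [Finite ι] (hL : ‖L‖ < 1) (v : ι → E)
    (hA : hutchinson (fun i x => L x + v i) A ⊆ A) (hAc : IsClosed A) (hA₀ : A.Nonempty)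
    (s : ℕ → ι) : ∑' k, (L ^ k) (v (s k)) ∈ A := by
  obtain ⟨B, hB⟩ := Finite.exists_le fun i => ‖v i‖
  refine subset_of_subset_hutchinson (fun i => L.lipschitzWith_add_const (v i)) (q := ‖L‖₊)
    hL hA hAc hA₀ ?_ ?_ (mem_range_self (f := fun s : ℕ → ι => ∑' k, (L ^ k) (v (s k))) s)
  · exact isBounded_iff_forall_norm_le.2
      ⟨_, forall_mem_range.2 fun s => norm_tsum_pow_apply_le hL fun k => hB (s k)⟩
  · rintro _ ⟨s, rfl⟩
    exact mem_iUnion.2 ⟨s 0, _, mem_range_self fun k => s (k + 1),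
      (tsum_pow_apply_eq_apply_add hL fun k => hB (s k)).symm⟩

theorem inter_image_nonempty_of_hasSum [Finite ι] (hL : ‖L‖ < 1) (v : ι → E)
    (hA : hutchinson (fun i x => L x + v i) A ⊆ A) (hAc : IsClosed A) (hA₀ : A.Nonempty)
    {i j : ι} {a b : ℕ → ι}
    (h : HasSum (fun k => (L ^ (k + 1)) (v (a k) - v (b k))) (v j - v i)) :
    ((fun x => L x + v i) '' A ∩ (fun x => L x + v j) '' A).Nonempty := by
  obtain ⟨B, hB⟩ := Finite.exists_le fun i => ‖v i‖
  have hsa := summable_pow_apply hL fun k => hB (a k)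
  have hsb := summable_pow_apply hL fun k => hB (b k)
  have hL_sub : L (∑' k, (L ^ k) (v (a k))) - L (∑' k, (L ^ k) (v (b k))) = v j - v i := by
    rw [← map_sub, ← hsa.tsum_sub hsb, L.map_tsum (hsa.sub hsb), ← h.tsum_eq]
    simp [pow_succ']
  refine ⟨_, ⟨_, tsum_pow_apply_mem hL v hA hAc hA₀ a, rfl⟩,
    ⟨_, tsum_pow_apply_mem hL v hA hAc hA₀ b, ?_⟩⟩
  rw [sub_eq_iff_eq_add] at hL_sub
  simp only [hL_sub]
  abel

end Affine

section GreedyExpansion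

variable {c x : ℝ}

def greedyRem (c x : ℝ) : ℕ → ℝ
  | 0 => x
  | n + 1 =>
    if c ^ (n + 1) ≤ greedyRem c x n then greedyRem c x n - c ^ (n + 1) else greedyRem c x n

def greedyDigits (c x : ℝ) : Set ℕ := {n | c ^ (n + 1) ≤ greedyRem c x n}

theorem greedyRem_succ (n : ℕ) :
    greedyRem c x (n + 1) =
      greedyRem c x n - (greedyDigits c x).indicator (fun n => c ^ (n + 1)) n := by
  simp only [greedyRem, greedyDigits, indicator_apply, mem_ofPred_eq]
  split_ifs <;> ring

theorem sum_range_indicator_greedyDigits (n : ℕ) :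
    ∑ k ∈ Finset.range n, (greedyDigits c x).indicator (fun n => c ^ (n + 1)) k =
      x - greedyRem c x n := by
  induction n with
  | zero => simp [greedyRem]
  | succ n ih => rw [Finset.sum_range_succ, ih, greedyRem_succ]; ring

/-- The remainder after `n` steps is at most the tail `∑_{k ≥ n} cᵏ⁺¹ = cⁿ⁺¹ / (1 - c)`; keeping
this invariant when digit `n` is skipped is where `1/2 ≤ c` enters. -/
theorem greedyRem_bounds (hc : c ∈ Ico (1 / 2 : ℝ) 1) (hx₀ : 0 ≤ x) (hx : (1 - c) * x ≤ c)
    (n : ℕ) : 0 ≤ greedyRem c x n ∧ (1 - c) * greedyRem c x n ≤ c ^ (n + 1) := by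
  obtain ⟨hc₁, hc₂⟩ := hc
  induction n with
  | zero => simpa [greedyRem] using ⟨hx₀, hx⟩
  | succ n ih =>
    have hpow : c ^ (n + 2) = c * c ^ (n + 1) := by ring
    have hpos : 0 < c ^ (n + 1) := pow_pos (by linarith) _
    simp only [greedyRem]
    split_ifs with h
    · constructor <;> nlinarith
    · constructor <;> nlinarith

theorem hasSum_indicator_greedyDigits (hc : c ∈ Ico (1 / 2 : ℝ) 1) (hx₀ : 0 ≤ x)
    (hx : (1 - c) * x ≤ c) : HasSum ((greedyDigits c x).indicator fun n => c ^ (n + 1)) x := by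
  have hc₀ : 0 ≤ c := by linarith [hc.1]
  have h1c : 0 < 1 - c := sub_pos.2 hc.2
  rw [hasSum_iff_tendsto_nat_of_nonneg (indicator_nonneg fun n _ => pow_nonneg hc₀ _)]
  simp only [sum_range_indicator_greedyDigits]
  have htail : Tendsto (fun n => c ^ (n + 1) / (1 - c)) atTop (𝓝 0) := by
    simpa using ((tendsto_pow_atTop_nhds_zero_of_lt_one hc₀ hc.2).comp
      (tendsto_add_atTop_nat 1)).div_const (1 - c)
  have hrem : Tendsto (greedyRem c x) atTop (𝓝 0) := by
    refine squeeze_zero (fun n => (greedyRem_bounds hc hx₀ hx n).1) (fun n => ?_) htail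
    rw [le_div_iff₀ h1c, mul_comm]
    exact (greedyRem_bounds hc hx₀ hx n).2
  simpa using tendsto_const_nhds.sub hrem

end GreedyExpansion

section Cube

def IsCubeVertex (x : E3) : Prop := ∀ i, x i = 1 ∨ x i = -1

def vtxDiffs : Set E3 := {u | ∃ a b, u = vtx a - vtx b}

theorem isCubeVertex_vtx (a : Fin 4) : IsCubeVertex (vtx a) := by
  intro i
  fin_cases a <;> fin_cases i <;> simp [vtx]

theorem IsCubeVertex.mem_C0 {x : E3} (hx : IsCubeVertex x) : x ∈ C0 :=
  fun i => by rcases hx i with h | h <;> simp [h]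

/-- The vertices are the points of `C0` of maximal norm `√3`. -/
theorem IsCubeVertex.map {N : E3 →L[ℝ] E3} (hN : ∀ y, ‖N y‖ = ‖y‖) (hC : MapsTo N C0 C0)
    {x : E3} (hx : IsCubeVertex x) : IsCubeVertex (N x) := by
  have hle : ∀ i, N x i ^ 2 ≤ 1 := fun i => by obtain ⟨h₁, h₂⟩ := hC hx.mem_C0 i; nlinarith
  have hx2 : ∀ i, x i ^ 2 = 1 := fun i => by rcases hx i with h | h <;> simp [h]
  have hsum : ∑ i, (1 - N x i ^ 2) = 0 := by
    rw [Finset.sum_sub_distrib, ← EuclideanSpace.real_norm_sq_eq, hN,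
      EuclideanSpace.real_norm_sq_eq]
    simp [hx2]
  have h := (Finset.sum_eq_zero_iff_of_nonneg fun i _ => sub_nonneg.2 (hle i)).1 hsum
  exact fun i => sq_eq_one_iff.1 (by linarith [h i (Finset.mem_univ i)])

theorem IsCubeVertex.exists_vtx_eq {x : E3} (hx : IsCubeVertex x) :
    ∃ a, vtx a = x ∨ vtx a = -x := by
  have hx' : x = !₂[x 0, x 1, x 2] := by ext i; fin_cases i <;> rfl
  rcases hx 0 with h0 | h0 <;> rcases hx 1 with h1 | h1 <;> rcases hx 2 with h2 | h2 <;>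
    rw [hx', h0, h1, h2] <;> simp [Fin.exists_fin_succ, vtx, ← WithLp.toLp_neg]

theorem inner_vtx (a b : Fin 4) : inner ℝ (vtx a) (vtx b) = if a = b then 3 else -1 := by
  fin_cases a <;> fin_cases b <;> simp only [PiLp.inner_apply, Fin.sum_univ_three] <;>
    simp [vtx] <;> norm_num

theorem neg_inner_vtx_ne (a b a' b' : Fin 4) :
    -inner ℝ (vtx a) (vtx b) ≠ inner ℝ (vtx a') (vtx b') := by
  simp only [inner_vtx]
  split_ifs <;> norm_num

/-- `N` sends each vertex of `T0` to a vertex of `T0` or of `-T0`, all to the same one of the two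
since inner products of vertices are preserved. -/
theorem mapsTo_vtxDiffs {N : E3 →L[ℝ] E3} (hN : N ∈ unitary (E3 →L[ℝ] E3))
    (hC : MapsTo N C0 C0) : MapsTo N vtxDiffs vtxDiffs := by
  have hnorm := ContinuousLinearMap.norm_map_of_mem_unitary hN
  rintro _ ⟨a, b, rfl⟩
  have hinner : inner ℝ (N (vtx a)) (N (vtx b)) = inner ℝ (vtx a) (vtx b) :=
    ContinuousLinearMap.inner_map_map_of_mem_unitary hN _ _
  obtain ⟨a', ha' | ha'⟩ := ((isCubeVertex_vtx a).map hnorm hC).exists_vtx_eq <;>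
  obtain ⟨b', hb' | hb'⟩ := ((isCubeVertex_vtx b).map hnorm hC).exists_vtx_eq
  · exact ⟨a', b', by rw [map_sub, ha', hb']⟩
  · rw [← ha', neg_eq_iff_eq_neg.1 hb'.symm, inner_neg_right] at hinner
    exact absurd hinner (neg_inner_vtx_ne _ _ _ _)
  · rw [neg_eq_iff_eq_neg.1 ha'.symm, ← hb', inner_neg_left] at hinner
    exact absurd hinner (neg_inner_vtx_ne _ _ _ _)
  · exact ⟨b', a', by rw [map_sub, ha', hb']; abel⟩

end Cube

section Attractor

variable {c : ℝ} {P : Matrix (Fin 3) (Fin 3) ℝ} {A : Set E3}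

theorem hasSum_indicator_greedyDigits_one (hc : c ∈ Ico (1 / 2 : ℝ) 1) :
    HasSum ((greedyDigits c 1).indicator fun n => c ^ (n + 1)) 1 :=
  hasSum_indicator_greedyDigits hc zero_le_one (by linarith [hc.1])

theorem memP6.toEuclideanCLM_mem_unitary (hP : memP6 P) :
    toEuclideanCLM (𝕜 := ℝ) P ∈ unitary (E3 →L[ℝ] E3) :=
  Unitary.map_mem _ hP.1.1

theorem memP6.mapsTo_star_toEuclideanCLM (hP : memP6 P) :
    MapsTo ⇑(star (toEuclideanCLM (𝕜 := ℝ) P)) C0 C0 := by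
  intro x hx
  rw [← hP.2] at hx
  obtain ⟨y, hy, rfl⟩ := hx
  have h := Unitary.star_mul_self_of_mem hP.toEuclideanCLM_mem_unitary
  change (star (toEuclideanCLM (𝕜 := ℝ) P)) (toEuclideanCLM (𝕜 := ℝ) P y) ∈ C0
  rwa [← mul_apply_eq_comp, h]

theorem norm_smul_toEuclideanCLM_lt_one (hc : c ∈ Ico (1 / 2 : ℝ) 1) (hP : memP6 P) :
    ‖c • toEuclideanCLM (𝕜 := ℝ) P‖ < 1 := by
  rw [norm_smul, CStarRing.norm_of_mem_unitary hP.toEuclideanCLM_mem_unitary, mul_one,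
    Real.norm_of_nonneg (by linarith [hc.1])]
  exact hc.2

theorem inter_image_fmap_nonempty (hc : c ∈ Ico (1 / 2 : ℝ) 1) (hP : memP6 P)
    (hA : IsAttractor c P A) (i j : Fin 4) : (fmap c P i '' A ∩ fmap c P j '' A).Nonempty := by
  set M := toEuclideanCLM (𝕜 := ℝ) P
  have hM := hP.toEuclideanCLM_mem_unitary
  set s := greedyDigits c 1
  have hu : ∀ k, s.indicator (fun k => (star M ^ (k + 1)) (vtx j - vtx i)) k ∈ vtxDiffs := by
    intro k
    by_cases hk : k ∈ s
    · rw [indicator_of_mem hk, FunLike.coe_pow_eq_iterate]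
      exact (mapsTo_vtxDiffs (Unitary.star_mem hM) hP.mapsTo_star_toEuclideanCLM).iterate _
        ⟨j, i, rfl⟩
    · exact ⟨0, 0, by rw [indicator_of_notMem hk, sub_self]⟩
  choose a b hab using hu
  refine inter_image_nonempty_of_hasSum (norm_smul_toEuclideanCLM_lt_one hc hP) vtx
    hA.2.2.ge hA.2.1.isClosed hA.1 (a := a) (b := b) ?_
  have hterm : ∀ k, ((c • M) ^ (k + 1)) (vtx (a k) - vtx (b k)) =
      s.indicator (fun k => c ^ (k + 1)) k • (vtx j - vtx i) := by
    intro k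
    rw [← hab k]
    by_cases hk : k ∈ s
    · rw [indicator_of_mem hk, indicator_of_mem hk, M.smul_pow_apply, ← mul_apply_eq_comp,
        pow_mul_pow_eq_one _ (Unitary.mul_star_self_of_mem hM), one_apply_eq_self]
    · rw [indicator_of_notMem hk, indicator_of_notMem hk, map_zero, zero_smul]
  have h := (hasSum_indicator_greedyDigits_one hc).smul_const (vtx j - vtx i)
  rwa [← funext hterm, one_smul] at h

end Attractor

theorem attractor_connected (c : ℝ) (hc : c ∈ Set.Ico (1 / 2 : ℝ) 1)
    (P : Matrix (Fin 3) (Fin 3) ℝ) (hP : memP6 P)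
    (A : Set E3) (hA : IsAttractor c P A) :
    IsConnected A ∧
    (∃ d : ℕ → E3, (∀ i, d i = vtx 0 - vtx 2 ∨ d i = vtx 2 - vtx 0 ∨ d i = 0) ∧
      (vtx 0 - vtx 2) + ∑' i : ℕ, c ^ (i + 1) • d i = 0) ∧
    (fmap c P 0 '' A ∩ fmap c P 2 '' A).Nonempty := by
  have hpieces := inter_image_fmap_nonempty hc hP hA
  refine ⟨⟨hA.1, isPreconnected_of_hutchinson_affine _ (norm_smul_toEuclideanCLM_lt_one hc hP)
    vtx hA.2.2.symm hA.2.1 fun i j => .single (hpieces i j)⟩, ?_, hpieces 0 2⟩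
  set s := greedyDigits c 1
  have hterm : ∀ n, c ^ (n + 1) • s.indicator (fun _ => vtx 2 - vtx 0) n =
      s.indicator (fun n => c ^ (n + 1)) n • (vtx 2 - vtx 0) := fun n => by
    by_cases hn : n ∈ s <;> simp [hn]
  refine ⟨s.indicator fun _ => vtx 2 - vtx 0, fun n => ?_, ?_⟩
  · by_cases hn : n ∈ s <;> simp [hn]
  · rw [tsum_congr hterm, ((hasSum_indicator_greedyDigits_one hc).smul_const _).tsum_eq,
      one_smul]
    abel
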